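/- arXiv:2507.20698 — 3 statements merged into one kernel-verified Lean document; each statement's English description precedes it below -/
import Mathlib

section
/- Let V be a real vector space, S ⊆ V a convex set, and a₁, a₂, b ∈ V. If the segment [a₁, b] meets S and the segment [a₂, b] meets S, then for every point a ∈ [a₁, a₂] the segment [a, b] meets S. -/
/-!
The set of points `x` for which `[x, b]` meets a convex set `s` is itself convex. If
`b + l • (x - b)` and `b + m • (y - b)` lie in `s` with `l, m ∈ (0, 1]`, then for `p + q = 1` the
combination of these two points with weights proportional to `p m` and `q l` is
`b + (l m / (p m + q l)) • (p • x + q • y - b)`, a point of `[p • x + q • y, b]`.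
-/

open Set

section

variable {𝕜 E : Type*} [Field 𝕜] [LinearOrder 𝕜] [IsStrictOrderedRing 𝕜]
  [AddCommGroup E] [Module 𝕜 E]

theorem segment_inter_nonempty_iff {x b : E} {s : Set E} :
    (segment 𝕜 x b ∩ s).Nonempty ↔ ∃ t ∈ Icc (0 : 𝕜) 1, b + t • (x - b) ∈ s := by
  simp only [segment_symm 𝕜 x b, segment_eq_image', Set.Nonempty, mem_inter_iff, mem_image]
  constructor
  · rintro ⟨_, ⟨t, ht, rfl⟩, hs⟩
    exact ⟨t, ht, hs⟩
  · rintro ⟨t, ht, hs⟩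
    exact ⟨_, ⟨t, ht, rfl⟩, hs⟩

theorem convex_setOf_segment_inter_nonempty {s : Set E} (hs : Convex 𝕜 s) (b : E) :
    Convex 𝕜 {x | (segment 𝕜 x b ∩ s).Nonempty} := by
  by_cases hb : b ∈ s
  · convert convex_univ (𝕜 := 𝕜) (E := E)
    exact eq_univ_of_forall fun x => ⟨b, right_mem_segment 𝕜 x b, hb⟩
  intro x hx y hy p q hp hq hpq
  obtain ⟨l, ⟨hl₀, hl₁⟩, hxs⟩ := segment_inter_nonempty_iff.1 hx
  obtain ⟨m, ⟨hm₀, hm₁⟩, hys⟩ := segment_inter_nonempty_iff.1 hy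
  have hl : 0 < l := hl₀.lt_of_ne (by rintro rfl; simp [hb] at hxs)
  have hm : 0 < m := hm₀.lt_of_ne (by rintro rfl; simp [hb] at hys)
  have hD : 0 < p * m + q * l := by
    rcases hp.eq_or_lt with rfl | hp
    · simpa [show q = 1 by simpa using hpq] using hl
    · positivity
  obtain ⟨z, hzs, hz⟩ :=
    hs.exists_mem_add_smul_eq hxs hys (mul_nonneg hp hm.le) (mul_nonneg hq hl.le)
  refine segment_inter_nonempty_iff.2 ⟨l * m / (p * m + q * l), ⟨by positivity, ?_⟩, ?_⟩
  · rw [div_le_one hD]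
    calc l * m = p * (l * m) + q * (m * l) := by linear_combination (-(l * m)) * hpq
      _ ≤ p * m + q * l := by gcongr <;> apply mul_le_of_le_one_left <;> assumption
  · convert hzs using 1
    apply smul_right_injective E hD.ne'
    simp only [hz, smul_add, smul_smul, mul_div_cancel₀ _ hD.ne']
    linear_combination (norm := module) (l * m) • congrArg (· • b) hpq

end

theorem segment_meets_convex_of_endpoints (V : Type*) [AddCommGroup V] [Module ℝ V]
    (S : Set V) (hS : Convex ℝ S) (a₁ a₂ b : V)
    (h₁ : (segment ℝ a₁ b ∩ S).Nonempty) (h₂ : (segment ℝ a₂ b ∩ S).Nonempty) :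
    ∀ a ∈ segment ℝ a₁ a₂, (segment ℝ a b ∩ S).Nonempty :=
  fun _ ha => (convex_setOf_segment_inter_nonempty hS b).segment_subset h₁ h₂ ha
end

section
/- Let S ⊆ ℝ^n be a convex set and let X⁺, X⁻ ⊆ ℝ^n. Then S separates every pair (x⁺, x⁻) ∈ X⁺ × X⁻ (i.e., the segment [x⁺, x⁻] meets S for all such pairs) if and only if S separates every pair (u, v) ∈ conv(X⁺) × conv(X⁻) (i.e., the segment [u, v] meets S for every u in the convex hull of X⁺ and every v in the convex hull of X⁻). -/
lemma key_triangle {n : ℕ} {S : Set (Fin n → ℝ)} (hS : Convex ℝ S) {x a b d : Fin n → ℝ}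
    (hd : d ∈ segment ℝ a b) (ha : (segment ℝ x a ∩ S).Nonempty)
    (hb : (segment ℝ x b ∩ S).Nonempty) : (segment ℝ x d ∩ S).Nonempty := by
  rw [segment_eq_image'] at hd
  obtain ⟨t, ⟨ht0, ht1⟩, rfl⟩ := hd
  obtain ⟨p, hpseg, hpS⟩ := ha
  obtain ⟨q, hqseg, hqS⟩ := hb
  rw [segment_eq_image'] at hpseg hqseg
  obtain ⟨α, ⟨hα0, hα1⟩, rfl⟩ := hpseg
  obtain ⟨β, ⟨hβ0, hβ1⟩, rfl⟩ := hqseg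
  simp only at hpS hqS
  rcases eq_or_lt_of_le hα0 with hα | hα
  · refine ⟨x, left_mem_segment ℝ x _, ?_⟩
    have : x + α • (a - x) = x := by rw [← hα]; simp
    rwa [this] at hpS
  rcases eq_or_lt_of_le hβ0 with hβ | hβ
  · refine ⟨x, left_mem_segment ℝ x _, ?_⟩
    have : x + β • (b - x) = x := by rw [← hβ]; simp
    rwa [this] at hqS
  set D : ℝ := β * (1 - t) + t * α with hD
  have hDpos : 0 < D := by
    rcases eq_or_lt_of_le ht1 with h1 | h1
    · rw [hD, h1]; simp; linarith
    · have h2 : 0 < β * (1 - t) := mul_pos hβ (by linarith)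
      nlinarith [mul_nonneg ht0 hα0]
  set s : ℝ := α * β / D with hs
  set u : ℝ := t * α / D with hu
  have hs0 : 0 ≤ s := by positivity
  have hs1 : s ≤ 1 := by
    rw [hs, div_le_one hDpos]
    nlinarith [mul_nonneg (mul_nonneg hβ0 (sub_nonneg.2 ht1)) (sub_nonneg.2 hα1),
      mul_nonneg (mul_nonneg ht0 hα0) (sub_nonneg.2 hβ1)]
  have hu0 : 0 ≤ u := by positivity
  have hu1 : u ≤ 1 := by
    rw [hu, div_le_one hDpos]; nlinarith
  have hz : x + s • ((a + t • (b - a)) - x) =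
      (x + α • (a - x)) + u • ((x + β • (b - x)) - (x + α • (a - x))) := by
    funext i
    simp only [Pi.add_apply, Pi.smul_apply, Pi.sub_apply, smul_eq_mul, hs, hu]
    field_simp
    ring
  refine ⟨x + s • ((a + t • (b - a)) - x), ?_, ?_⟩
  · rw [segment_eq_image']
    exact ⟨s, ⟨hs0, hs1⟩, rfl⟩
  · rw [hz]
    have : (x + α • (a - x)) + u • ((x + β • (b - x)) - (x + α • (a - x))) ∈
        segment ℝ (x + α • (a - x)) (x + β • (b - x)) := by
      rw [segment_eq_image']
      exact ⟨u, ⟨hu0, hu1⟩, rfl⟩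
    exact hS.segment_subset hpS hqS this

theorem separation_iff_convexHull_separation (n : ℕ) (S : Set (Fin n → ℝ))
    (hS : Convex ℝ S) (Xp Xm : Set (Fin n → ℝ)) :
    (∀ xp ∈ Xp, ∀ xm ∈ Xm, (segment ℝ xp xm ∩ S).Nonempty) ↔
    (∀ u ∈ convexHull ℝ Xp, ∀ v ∈ convexHull ℝ Xm, (segment ℝ u v ∩ S).Nonempty) := by
  constructor
  · intro h u hu v hv
    have step1 : ∀ xp ∈ Xp, ∀ v ∈ convexHull ℝ Xm, (segment ℝ xp v ∩ S).Nonempty := by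
      intro xp hxp
      have hT : Convex ℝ {v | (segment ℝ xp v ∩ S).Nonempty} := by
        intro a ha b hb t1 t2 ht1 ht2 hsum
        exact key_triangle hS ⟨t1, t2, ht1, ht2, hsum, rfl⟩ ha hb
      exact fun v hv => convexHull_min (fun y hy => h xp hxp y hy) hT hv
    have hT2 : Convex ℝ {u | (segment ℝ u v ∩ S).Nonempty} := by
      intro a ha b hb t1 t2 ht1 ht2 hsum
      rw [Set.mem_setOf_eq, segment_symm]
      rw [Set.mem_setOf_eq, segment_symm] at ha hb
      exact key_triangle hS ⟨t1, t2, ht1, ht2, hsum, rfl⟩ ha hb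
    exact convexHull_min (fun y hy => step1 y hy v hv) hT2 hu
  · intro h xp hxp xm hxm
    exact h xp (subset_convexHull ℝ Xp hxp) xm (subset_convexHull ℝ Xm hxm)
end

section
/- Let t ∈ ℝ^n with t ≠ 0, let F ∈ ℝ^{n×n} be symmetric positive definite, and suppose the block matrix S̃ = [[1, tᵀ],[t, F]] ∈ ℝ^{(n+1)×(n+1)} is positive definite. Set d = −F⁻¹ t and δ = 1 − dᵀ F d, so that 0 < δ < 1. Then for every x ∈ ℝ^n: (1, x)ᵀ S̃ (1, x) ≤ 1 if and only if (x − d)ᵀ ((1/(1−δ)) F) (x − d) ≤ 1. In other words, the set of x ∈ ℝ^n with (1, x) in the homogeneous (n+1)-dimensional ellipsoid defined by S̃ is exactly the non-homogeneous n-dimensional ellipsoid E(F/(1−δ), d). -/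
/-! Completing the square: with `F d = -t`, the form `(1, x)ᵀ S̃ (1, x) = 1 + 2 tᵀx + xᵀ F x`
equals `(x - d)ᵀ F (x - d) + δ`, where `δ = 1 - dᵀ F d`. Hence it is at most `1` exactly when
`(x - d)ᵀ F (x - d) ≤ 1 - δ`, and `1 - δ > 0` lets us divide. -/

open Matrix

theorem sumElim_dotProduct_fromBlocks_mulVec_sumElim {ι R : Type*} [Fintype ι] [CommRing R]
    (s : R) (t : ι → R) (F : Matrix ι ι R) (x : ι → R) :
    Sum.elim (fun _ => 1) x ⬝ᵥ fromBlocks (of fun _ _ => s) (replicateRow Unit t)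
        (replicateCol Unit t) F *ᵥ Sum.elim (fun _ => 1) x =
      s + 2 * (t ⬝ᵥ x) + x ⬝ᵥ F *ᵥ x := by
  rw [fromBlocks_mulVec, Sum.elim_comp_inl, Sum.elim_comp_inr, sumElim_dotProduct_sumElim]
  simp only [dotProduct, Finset.univ_unique, PUnit.default_eq_unit, Pi.add_apply, mulVec,
    of_apply, mul_one, Finset.sum_const, Finset.card_singleton, one_smul, replicateRow_apply,
    mul_add, mul_comm, one_mul, smul_add, replicateCol_apply, Finset.sum_add_distrib]
  ring

theorem Matrix.IsSymm.dotProduct_mulVec_sub_sub {ι R : Type*} [Fintype ι] [CommRing R]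
    {F : Matrix ι ι R} (hF : F.IsSymm) {t d : ι → R} (hd : F *ᵥ d = -t) (x : ι → R) :
    (x - d) ⬝ᵥ F *ᵥ (x - d) = x ⬝ᵥ F *ᵥ x + 2 * (t ⬝ᵥ x) + d ⬝ᵥ F *ᵥ d := by
  have hdx : d ⬝ᵥ F *ᵥ x = -(t ⬝ᵥ x) := by
    rw [dotProduct_mulVec, ← mulVec_transpose, hF, dotProduct_comm, hd, dotProduct_neg,
      dotProduct_comm]
  rw [mulVec_sub, dotProduct_sub, sub_dotProduct, sub_dotProduct, hdx, hd]
  simp only [dotProduct_neg, dotProduct_comm x t]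
  ring

theorem homogeneous_ellipsoid_eq_nonhomogeneous_general (n : ℕ) (t : Fin n → ℝ)
    (F : Matrix (Fin n) (Fin n) ℝ) (hFsymm : F.IsSymm) (hFpd : F.PosDef)
    (St : Matrix (Unit ⊕ Fin n) (Unit ⊕ Fin n) ℝ)
    (hSt : St = Matrix.fromBlocks (Matrix.of fun _ _ => (1 : ℝ)) (Matrix.replicateRow Unit t)
      (Matrix.replicateCol Unit t) F)
    (d : Fin n → ℝ) (hd : d = -(F⁻¹.mulVec t))
    (δ : ℝ) (hδ : δ = 1 - d ⬝ᵥ F.mulVec d) (hδ01 : 0 < δ ∧ δ < 1) :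
    ∀ x : Fin n → ℝ,
      (Sum.elim (fun _ => (1 : ℝ)) x) ⬝ᵥ St.mulVec (Sum.elim (fun _ => (1 : ℝ)) x) ≤ 1 ↔
      (x - d) ⬝ᵥ ((1 / (1 - δ)) • F).mulVec (x - d) ≤ 1 := by
  intro x
  have hFd : F *ᵥ d = -t := by
    rw [hd, mulVec_neg, mulVec_mulVec,
      mul_nonsing_inv F ((isUnit_iff_isUnit_det F).mp hFpd.isUnit), one_mulVec]
  have h1δ : 0 < 1 - δ := sub_pos.mpr hδ01.2
  rw [hSt, sumElim_dotProduct_fromBlocks_mulVec_sumElim, smul_mulVec, dotProduct_smul,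
    smul_eq_mul, hFsymm.dotProduct_mulVec_sub_sub hFd, one_div_mul_eq_div, div_le_one h1δ]
  constructor <;> intro h <;> linarith

theorem homogeneous_ellipsoid_eq_nonhomogeneous (n : ℕ) (t : Fin n → ℝ) (ht : t ≠ 0)
    (F : Matrix (Fin n) (Fin n) ℝ) (hFsymm : F.IsSymm) (hFpd : F.PosDef)
    (St : Matrix (Unit ⊕ Fin n) (Unit ⊕ Fin n) ℝ)
    (hSt : St = Matrix.fromBlocks (Matrix.of fun _ _ => (1 : ℝ)) (Matrix.replicateRow Unit t)
      (Matrix.replicateCol Unit t) F)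
    (hStpd : St.PosDef)
    (d : Fin n → ℝ) (hd : d = -(F⁻¹.mulVec t))
    (δ : ℝ) (hδ : δ = 1 - d ⬝ᵥ F.mulVec d) (hδ01 : 0 < δ ∧ δ < 1) :
    ∀ x : Fin n → ℝ,
      (Sum.elim (fun _ => (1 : ℝ)) x) ⬝ᵥ St.mulVec (Sum.elim (fun _ => (1 : ℝ)) x) ≤ 1 ↔
      (x - d) ⬝ᵥ ((1 / (1 - δ)) • F).mulVec (x - d) ≤ 1 :=
  homogeneous_ellipsoid_eq_nonhomogeneous_general n t F hFsymm hFpd St hSt d hd δ hδ hδ01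
end
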